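/- arXiv:2604.12322 — 3 statements merged into one kernel-verified Lean document; each statement's English description precedes it below -/
import Mathlib

section
/- For every y ∈ ℝ^d one has (∫ x φ_σ(y − x) dμ(x)) / p(y) = y + σ² ∇_y log p(y); that is, the posterior mean E[X | X + σZ = y] of X given the Gaussian-perturbed observation equals y + σ² times the score of the marginal density at y (Tweedie's formula). -/
set_option maxHeartbeats 1000000
set_option synthInstance.maxHeartbeats 400000

open MeasureTheory Real

/-- The density of `N(0, σ² I_d)` on `ℝ^d`. -/
noncomputable def gaussDensity (d : ℕ) (σ : ℝ) (u : EuclideanSpace ℝ (Fin d)) : ℝ :=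
  (2 * π * σ ^ 2) ^ (-(d : ℝ) / 2) * Real.exp (-‖u‖ ^ 2 / (2 * σ ^ 2))

/-- The density of `X + σZ`, `X ~ μ`, `Z ~ N(0, I_d)` independent:
`p(y) = ∫ φ_σ(y − x) dμ(x)`. -/
noncomputable def marginalDensity (d : ℕ) (σ : ℝ) (μ : Measure (EuclideanSpace ℝ (Fin d)))
    (y : EuclideanSpace ℝ (Fin d)) : ℝ :=
  ∫ x, gaussDensity d σ (y - x) ∂μ

section Aux

variable {d : ℕ} {σ : ℝ}

local notation "H" => EuclideanSpace ℝ (Fin d)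

lemma gauss_cont : Continuous (gaussDensity d σ) := by
  unfold gaussDensity
  exact continuous_const.mul
    (Real.continuous_exp.comp (((continuous_norm.pow 2).neg).div_const _))

lemma gauss_pos (hσ : 0 < σ) (u : H) : 0 < gaussDensity d σ u :=
  mul_pos (Real.rpow_pos_of_pos (by positivity) _) (Real.exp_pos _)

lemma gauss_le (hσ : 0 < σ) (u : H) :
    gaussDensity d σ u ≤ (2 * π * σ ^ 2) ^ (-(d : ℝ) / 2) := by
  have h1 : Real.exp (-‖u‖ ^ 2 / (2 * σ ^ 2)) ≤ 1 := by
    apply Real.exp_le_one_iff.mpr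
    apply div_nonpos_of_nonpos_of_nonneg
    · simp [sq_nonneg]
    · positivity
  calc (2 * π * σ ^ 2) ^ (-(d : ℝ) / 2) * Real.exp (-‖u‖ ^ 2 / (2 * σ ^ 2))
      ≤ (2 * π * σ ^ 2) ^ (-(d : ℝ) / 2) * 1 :=
        mul_le_mul_of_nonneg_left h1 (by positivity)
    _ = _ := mul_one _

lemma gauss_hasFDerivAt (hσ : 0 < σ) (u : H) :
    HasFDerivAt (gaussDensity d σ)
      ((-(σ ^ 2)⁻¹ * gaussDensity d σ u) • innerSL ℝ u) u := by
  have h1 : HasFDerivAt (fun v : H => ‖v‖ ^ 2) (2 • innerSL ℝ u) u :=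
    (hasStrictFDerivAt_norm_sq u).hasFDerivAt
  have h2 : HasFDerivAt (fun v : H => -‖v‖ ^ 2 / (2 * σ ^ 2))
      ((-(2 * σ ^ 2)⁻¹) • (2 • innerSL ℝ u)) u := by
    have h := h1.const_mul (-(2 * σ ^ 2)⁻¹)
    have he : (fun v : H => -(2 * σ ^ 2)⁻¹ * ‖v‖ ^ 2) = fun v : H => -‖v‖ ^ 2 / (2 * σ ^ 2) := by
      funext v; ring
    rwa [he] at h
  have h3 := (h2.exp).const_mul ((2 * π * σ ^ 2) ^ (-(d : ℝ) / 2))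
  refine h3.congr_fderiv ?_
  ext w
  simp only [gaussDensity, ContinuousLinearMap.coe_smul', Pi.smul_apply, smul_eq_mul,
    ContinuousLinearMap.smul_apply]
  push_cast
  ring

variable {μ : Measure (EuclideanSpace ℝ (Fin d))} [IsProbabilityMeasure μ]

lemma int_gauss (hσ : 0 < σ) (y : H) :
    Integrable (fun x : H => gaussDensity d σ (y - x)) μ := by
  refine (integrable_const ((2 * π * σ ^ 2) ^ (-(d : ℝ) / 2))).mono' ?_ ?_
  · exact (gauss_cont.comp (continuous_const.sub continuous_id)).aestronglyMeasurable
  · filter_upwards with x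
    rw [Real.norm_of_nonneg (gauss_pos hσ _).le]
    exact gauss_le hσ _

lemma int_gauss_smul (hσ : 0 < σ) (hmom : Integrable (fun x : H => ‖x‖) μ) (y : H) :
    Integrable (fun x : H => gaussDensity d σ (y - x) • x) μ := by
  refine (hmom.const_mul ((2 * π * σ ^ 2) ^ (-(d : ℝ) / 2))).mono' ?_ ?_
  · exact ((gauss_cont.comp (continuous_const.sub continuous_id)).smul
      continuous_id).aestronglyMeasurable
  · filter_upwards with x
    rw [norm_smul, Real.norm_of_nonneg (gauss_pos hσ _).le]
    exact mul_le_mul_of_nonneg_right (gauss_le hσ _) (norm_nonneg x)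

lemma int_gauss_smul_sub (hσ : 0 < σ) (hmom : Integrable (fun x : H => ‖x‖) μ) (y : H) :
    Integrable (fun x : H => ((σ ^ 2)⁻¹ * gaussDensity d σ (y - x)) • (x - y)) μ := by
  have h : Integrable (fun x : H => (σ ^ 2)⁻¹ * ((2 * π * σ ^ 2) ^ (-(d : ℝ) / 2) * (‖x‖ + ‖y‖)))
      μ := ((hmom.add (integrable_const ‖y‖)).const_mul _).const_mul _
  refine h.mono' ?_ ?_
  · exact ((continuous_const.mul
      (gauss_cont.comp (continuous_const.sub continuous_id))).smul
      (continuous_id.sub continuous_const)).aestronglyMeasurable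
  · filter_upwards with x
    rw [norm_smul, Real.norm_of_nonneg
      (mul_nonneg (by positivity) (gauss_pos hσ (y - x)).le)]
    have h1 : ‖x - y‖ ≤ ‖x‖ + ‖y‖ := norm_sub_le x y
    have h2 : gaussDensity d σ (y - x) ≤ (2 * π * σ ^ 2) ^ (-(d : ℝ) / 2) := gauss_le hσ _
    have h3 : 0 < gaussDensity d σ (y - x) := gauss_pos hσ _
    have hc : (0:ℝ) < (2 * π * σ ^ 2) ^ (-(d : ℝ) / 2) := by positivity
    calc (σ ^ 2)⁻¹ * gaussDensity d σ (y - x) * ‖x - y‖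
        ≤ (σ ^ 2)⁻¹ * ((2 * π * σ ^ 2) ^ (-(d : ℝ) / 2)) * (‖x‖ + ‖y‖) := by
          apply mul_le_mul (by gcongr) h1 (norm_nonneg _) (by positivity)
      _ = (σ ^ 2)⁻¹ * ((2 * π * σ ^ 2) ^ (-(d : ℝ) / 2) * (‖x‖ + ‖y‖)) := by ring

lemma toDual_eq_innerSL (v : H) : InnerProductSpace.toDual ℝ (EuclideanSpace ℝ (Fin d)) v
    = innerSL ℝ v := by
  ext w
  simp [InnerProductSpace.toDual_apply_apply]

lemma marginal_pos (hσ : 0 < σ) (y : H) : 0 < marginalDensity d σ μ y := by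
  rw [marginalDensity,
    integral_pos_iff_support_of_nonneg (fun x => (gauss_pos hσ _).le) (int_gauss hσ y)]
  have hs : (Function.support fun x : H => gaussDensity d σ (y - x)) = Set.univ := by
    ext x; simp [Function.support, (gauss_pos hσ (y - x)).ne']
  rw [hs]
  simp

lemma marginal_hasGradientAt (hσ : 0 < σ) (hmom : Integrable (fun x : H => ‖x‖) μ) (y : H) :
    HasGradientAt (marginalDensity d σ μ)
      ((σ ^ 2)⁻¹ • ((∫ x, gaussDensity d σ (y - x) • x ∂μ) - marginalDensity d σ μ y • y)) y := by
  set c : ℝ := (2 * π * σ ^ 2) ^ (-(d : ℝ) / 2) with hc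
  have hcpos : 0 < c := by positivity
  have key : HasFDerivAt (fun w => ∫ x, gaussDensity d σ (w - x) ∂μ)
      (∫ x, ((σ ^ 2)⁻¹ * gaussDensity d σ (y - x)) • innerSL ℝ (x - y) ∂μ) y := by
    apply hasFDerivAt_integral_of_dominated_of_fderiv_le (s := Metric.ball y 1)
      (F' := fun (w : H) (x : H) => ((σ ^ 2)⁻¹ * gaussDensity d σ (w - x)) • innerSL ℝ (x - w))
      (bound := fun x => (σ ^ 2)⁻¹ * c * (‖x‖ + (‖y‖ + 1))) (Metric.ball_mem_nhds y one_pos)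
    · filter_upwards with w
      exact (gauss_cont.comp (continuous_const.sub continuous_id)).aestronglyMeasurable
    · exact int_gauss hσ y
    · exact ((continuous_const.mul
        (gauss_cont.comp (continuous_const.sub continuous_id))).smul
        ((innerSL ℝ).continuous.comp (continuous_id.sub continuous_const))).aestronglyMeasurable
    · filter_upwards with x w hw
      rw [norm_smul ((σ ^ 2)⁻¹ * gaussDensity d σ (w - x)) (innerSL ℝ (x - w)),
        innerSL_apply_norm,
        Real.norm_of_nonneg (mul_nonneg (by positivity) (gauss_pos hσ _).le)]
      have hb : ‖x - w‖ ≤ ‖x‖ + (‖y‖ + 1) := by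
        have h1 : ‖x - w‖ ≤ ‖x‖ + ‖w‖ := norm_sub_le x w
        have h3 : ‖w - y‖ < 1 := by rwa [mem_ball_iff_norm] at hw
        have h4 : ‖w‖ ≤ ‖w - y‖ + ‖y‖ := by
          have := norm_add_le (w - y) y
          simpa using this
        linarith
      have h5 : gaussDensity d σ (w - x) ≤ c := gauss_le hσ _
      have h6 : (0:ℝ) ≤ (σ ^ 2)⁻¹ * gaussDensity d σ (w - x) :=
        mul_nonneg (by positivity) (gauss_pos hσ _).le
      exact mul_le_mul (by gcongr) hb (norm_nonneg _)
        (mul_nonneg (by positivity) hcpos.le)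
    · exact ((hmom.add (integrable_const _)).const_mul _)
    · filter_upwards with x w _
      have hsub : HasFDerivAt (fun w : H => w - x) (ContinuousLinearMap.id ℝ _) w :=
        (hasFDerivAt_id w).sub_const x
      have hcomp := (gauss_hasFDerivAt hσ (w - x)).comp w hsub
      rw [ContinuousLinearMap.comp_id] at hcomp
      refine hcomp.congr_fderiv ?_
      rw [show x - w = -(w - x) by abel, map_neg, smul_neg, ← neg_smul]
      ring_nf
  rw [hasGradientAt_iff_hasFDerivAt, toDual_eq_innerSL]
  have heq : ∫ x, ((σ ^ 2)⁻¹ * gaussDensity d σ (y - x)) • innerSL ℝ (x - y) ∂μ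
      = innerSL ℝ
        ((σ ^ 2)⁻¹ • ((∫ x, gaussDensity d σ (y - x) • x ∂μ) - marginalDensity d σ μ y • y)) := by
    have h1 : ∀ x : H, ((σ ^ 2)⁻¹ * gaussDensity d σ (y - x)) • innerSL ℝ (x - y)
        = innerSL ℝ (((σ ^ 2)⁻¹ * gaussDensity d σ (y - x)) • (x - y)) := fun x =>
      ((innerSL ℝ).map_smul _ _).symm
    simp_rw [h1]
    rw [ContinuousLinearMap.integral_comp_comm _ (int_gauss_smul_sub hσ hmom y)]
    congr 1
    have h2 : ∀ x : H, ((σ ^ 2)⁻¹ * gaussDensity d σ (y - x)) • (x - y)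
        = (σ ^ 2)⁻¹ • (gaussDensity d σ (y - x) • x - gaussDensity d σ (y - x) • y) := by
      intro x
      simp [mul_smul, smul_sub]
    simp_rw [h2]
    rw [integral_smul, integral_sub (int_gauss_smul hσ hmom y)
      ((int_gauss hσ y).smul_const y), integral_smul_const]
    rfl
  rw [← heq]
  exact key

end Aux

/-- **Tweedie's formula.** For every `y ∈ ℝ^d`,
`(∫ x φ_σ(y − x) dμ(x)) / p(y) = y + σ² ∇_y log p(y)`. -/
theorem tweedie_formula (d : ℕ) (hd : 1 ≤ d) (σ : ℝ) (hσ : 0 < σ)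
    (μ : Measure (EuclideanSpace ℝ (Fin d))) [IsProbabilityMeasure μ]
    (hmom : Integrable (fun x => ‖x‖) μ) :
    ∀ y : EuclideanSpace ℝ (Fin d),
      (marginalDensity d σ μ y)⁻¹ • (∫ x, gaussDensity d σ (y - x) • x ∂μ)
        = y + σ ^ 2 • gradient (fun w => Real.log (marginalDensity d σ μ w)) y := by
  intro y
  have hp : 0 < marginalDensity d σ μ y := marginal_pos hσ y
  have hg := marginal_hasGradientAt hσ hmom y
  set m := ∫ x, gaussDensity d σ (y - x) • x ∂μ with hm
  set p := marginalDensity d σ μ y with hpdef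
  set g := (σ ^ 2)⁻¹ • (m - p • y) with hgdef
  have hlog : HasGradientAt (fun w => Real.log (marginalDensity d σ μ w)) (p⁻¹ • g) y := by
    rw [hasGradientAt_iff_hasFDerivAt, toDual_eq_innerSL]
    have h := (Real.hasDerivAt_log hp.ne').comp_hasFDerivAt y hg.hasFDerivAt
    have h2 : innerSL ℝ (p⁻¹ • g)
        = p⁻¹ • InnerProductSpace.toDual ℝ (EuclideanSpace ℝ (Fin d)) g := by
      rw [(innerSL ℝ).map_smul, toDual_eq_innerSL]
    rw [h2]
    exact h
  rw [hlog.gradient, hgdef, smul_smul, smul_smul]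
  have hsc : σ ^ 2 * p⁻¹ * (σ ^ 2)⁻¹ = p⁻¹ := by
    field_simp
  rw [hsc, smul_sub, smul_smul, inv_mul_cancel₀ hp.ne', one_smul]
  abel
end

section
/- Gradient equivalence (single-sample form): if F : ℝ^m → E is differentiable at θ₀, then the mixed consistency loss L_mix(θ) = ‖f(F(θ)) − ((1−λ) x + λ f(v_fake))‖² and the alternative loss G(θ) = (1−λ) L_sup(θ) + λ L_cons(θ), where L_sup(θ) = ‖f(F(θ)) − x‖² and L_cons(θ) = ‖f(F(θ)) − f(v_fake)‖², are both differentiable at θ₀ and their Fréchet derivatives at θ₀ are equal. -/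
/-- **Gradient equivalence (single-sample form).**
With `x_t = t z + (1−t) x`, endpoint predictor `f(v) = x_t − t v`, and fixed
`λ` and `v_fake`: if `F` is differentiable at `θ₀`, then the mixed consistency loss
`L_mix(θ) = ‖f(F(θ)) − ((1−λ) x + λ f(v_fake))‖²` and the alternative loss
`G(θ) = (1−λ) ‖f(F(θ)) − x‖² + λ ‖f(F(θ)) − f(v_fake)‖²` are both differentiable at
`θ₀` and have equal Fréchet derivatives there. -/
theorem gradient_equivalence {E : Type*} [NormedAddCommGroup E]
    [InnerProductSpace ℝ E] (m : ℕ) (t : ℝ) (z x : E) (l : ℝ) (vfake : E)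
    (F : EuclideanSpace ℝ (Fin m) → E) (θ₀ : EuclideanSpace ℝ (Fin m))
    (hF : DifferentiableAt ℝ F θ₀) :
    DifferentiableAt ℝ
      (fun θ => ‖((t • z + (1 - t) • x) - t • F θ)
          - ((1 - l) • x + l • ((t • z + (1 - t) • x) - t • vfake))‖ ^ 2) θ₀
    ∧ DifferentiableAt ℝ
      (fun θ => (1 - l) * ‖((t • z + (1 - t) • x) - t • F θ) - x‖ ^ 2
          + l * ‖((t • z + (1 - t) • x) - t • F θ)
              - ((t • z + (1 - t) • x) - t • vfake)‖ ^ 2) θ₀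
    ∧ fderiv ℝ
        (fun θ => ‖((t • z + (1 - t) • x) - t • F θ)
            - ((1 - l) • x + l • ((t • z + (1 - t) • x) - t • vfake))‖ ^ 2) θ₀
      = fderiv ℝ
        (fun θ => (1 - l) * ‖((t • z + (1 - t) • x) - t • F θ) - x‖ ^ 2
            + l * ‖((t • z + (1 - t) • x) - t • F θ)
                - ((t • z + (1 - t) • x) - t • vfake)‖ ^ 2) θ₀ := by

  set fv : E := (t • z + (1 - t) • x) - t • vfake with hfv
  have ha : DifferentiableAt ℝ (fun θ => (t • z + (1 - t) • x) - t • F θ) θ₀ :=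
    (differentiableAt_const _).sub (hF.const_smul t)
  have hG : DifferentiableAt ℝ
      (fun θ => (1 - l) * ‖((t • z + (1 - t) • x) - t • F θ) - x‖ ^ 2
          + l * ‖((t • z + (1 - t) • x) - t • F θ) - fv‖ ^ 2) θ₀ := by
    apply DifferentiableAt.add
    · exact ((ha.sub (differentiableAt_const x)).norm_sq ℝ).const_mul _
    · exact ((ha.sub (differentiableAt_const fv)).norm_sq ℝ).const_mul _
  have key : ∀ a : E, ‖a - ((1 - l) • x + l • fv)‖ ^ 2
      = ((1 - l) * ‖a - x‖ ^ 2 + l * ‖a - fv‖ ^ 2)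
        + (‖(1 - l) • x + l • fv‖ ^ 2 - (1 - l) * ‖x‖ ^ 2 - l * ‖fv‖ ^ 2) := by
    intro a
    rw [norm_sub_sq_real, norm_sub_sq_real, norm_sub_sq_real, inner_add_right,
      inner_smul_right, inner_smul_right]
    ring
  have hfun : (fun θ => ‖((t • z + (1 - t) • x) - t • F θ)
          - ((1 - l) • x + l • fv)‖ ^ 2)
      = fun θ => ((1 - l) * ‖((t • z + (1 - t) • x) - t • F θ) - x‖ ^ 2
          + l * ‖((t • z + (1 - t) • x) - t • F θ) - fv‖ ^ 2)
        + (‖(1 - l) • x + l • fv‖ ^ 2 - (1 - l) * ‖x‖ ^ 2 - l * ‖fv‖ ^ 2) :=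
    funext fun θ => key _
  refine ⟨?_, hG, ?_⟩
  · rw [hfun]; exact hG.add_const _
  · rw [hfun, fderiv_add_const]
end

section
/- Score-space (Fisher-divergence) form of the APEX gradient: if F : ℝ^m → E is differentiable at θ₀, then the alternative loss G(θ) = (1−λ) ‖f(F(θ)) − x‖² + λ ‖f(F(θ)) − f(v_fake)‖² is differentiable at θ₀ with Fréchet derivative equal to the linear map h ↦ −(2 t³ / (1 − t)) ⟨σ(F(θ₀)) − s_mix, DF(θ₀)[h]⟩, where s_mix = (1−λ) σ(v_data) + λ σ(v_fake) and σ is the score–velocity duality map formed at the point x_t. -/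
/-- **Score-space (Fisher-divergence) form of the APEX gradient.**
With `x_t = t z + (1−t) x`, `v_data = z − x`, endpoint predictor `f(v) = x_t − t v`,
and the score–velocity duality map `σ(v) = −(x_t + (1 − t) v) / t` formed at `x_t`:
if `F` is differentiable at `θ₀` with Fréchet derivative `DF`, then the alternative
loss `G(θ) = (1−λ) ‖f(F(θ)) − x‖² + λ ‖f(F(θ)) − f(v_fake)‖²` is differentiable at
`θ₀` with Fréchet derivative
`h ↦ −(2 t³ / (1 − t)) ⟨σ(F(θ₀)) − s_mix, DF[h]⟩`,
where `s_mix = (1−λ) σ(v_data) + λ σ(v_fake)`. -/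
theorem apex_gradient_score_space {E : Type*} [NormedAddCommGroup E]
    [InnerProductSpace ℝ E] (m : ℕ) (t : ℝ) (ht : t ∈ Set.Ioo (0 : ℝ) 1)
    (z x : E) (l : ℝ) (vfake : E)
    (F : EuclideanSpace ℝ (Fin m) → E) (θ₀ : EuclideanSpace ℝ (Fin m))
    (DF : EuclideanSpace ℝ (Fin m) →L[ℝ] E) (hF : HasFDerivAt F DF θ₀) :
    HasFDerivAt
      (fun θ => (1 - l) * ‖((t • z + (1 - t) • x) - t • F θ) - x‖ ^ 2
          + l * ‖((t • z + (1 - t) • x) - t • F θ)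
              - ((t • z + (1 - t) • x) - t • vfake)‖ ^ 2)
      ((-(2 * t ^ 3 / (1 - t))) •
        ((innerSL ℝ
          ((-(t⁻¹ • ((t • z + (1 - t) • x) + (1 - t) • F θ₀)))
            - ((1 - l) • (-(t⁻¹ • ((t • z + (1 - t) • x) + (1 - t) • (z - x))))
                + l • (-(t⁻¹ • ((t • z + (1 - t) • x) + (1 - t) • vfake)))))).comp DF))
      θ₀ := by
  obtain ⟨ht0, ht1⟩ := ht
  have ht0' : t ≠ 0 := ne_of_gt ht0
  have ht1' : (1 : ℝ) - t ≠ 0 := sub_ne_zero.mpr (ne_of_gt ht1)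
  set xt : E := t • z + (1 - t) • x with hxt
  -- derivative of θ ↦ (xt - t • F θ) - c for constant c
  have key : ∀ c : E, HasFDerivAt (fun θ => (xt - t • F θ) - c)
      ((-t) • DF) θ₀ := by
    intro c
    have h1 : HasFDerivAt (fun θ => xt - t • F θ) (-(t • DF)) θ₀ :=
      (hF.const_smul t).const_sub xt
    have h2 := h1.sub_const c
    refine h2.congr_fderiv ?_
    ext h
    simp [neg_smul]
  have hsq : ∀ c : E,
      HasFDerivAt (fun θ => ‖(xt - t • F θ) - c‖ ^ 2)
        (2 • (innerSL ℝ ((xt - t • F θ₀) - c)).comp ((-t) • DF)) θ₀ :=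
    fun c => (key c).norm_sq
  have h3 := ((hsq x).const_mul (1 - l)).add ((hsq (xt - t • vfake)).const_mul l)
  refine h3.congr_fderiv ?_
  ext h
  simp only [ContinuousLinearMap.smul_apply, ContinuousLinearMap.comp_apply,
    ContinuousLinearMap.add_apply, ContinuousLinearMap.coe_smul', Pi.smul_apply,
    innerSL_apply_apply, smul_eq_mul]
  simp only [hxt, nsmul_eq_mul, Nat.cast_ofNat, inner_sub_left, inner_add_left,
    inner_neg_left, real_inner_smul_left, inner_smul_right, map_neg, map_add, map_smul,
    smul_eq_mul, ContinuousLinearMap.smul_apply]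
  field_simp
  ring
end
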